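/- Let A₀, A₁, …, A_d ∈ ℝ^{m×n}, b ∈ ℝ^m, and A(θ) = A₀ + Σ_{j=1}^d θ_j A_j. Suppose P_i ∈ ℝ^{m_i×m} (i = 1,…,d) satisfy P_i A_j = 0 for i ≠ j (i, j ∈ {1,…,d}), P₀ ∈ ℝ^{m₀×m} satisfies P₀A_j = 0 for j = 1,…,d, and there exist M_i ∈ ℝ^{m×m_i} (i = 0,…,d) with Σ_{i=0}^d M_iP_i = I. Then for any z ∈ ℝ^n the following are equivalent: (a) there exists θ ∈ ℝ^d with −1 ≤ θ ≤ 1 and A(θ)z = b; (b) P₀A₀z = P₀b and, for every i ∈ {1,…,d} and every positive semidefinite N_i ∈ S₊^{m_i}, (b − A₀z)ᵀP_iᵀN_iP_i(b − A₀z) ≤ zᵀA_iᵀP_iᵀN_iP_iA_i z. -/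

import Mathlib

open Matrix

/-!
The separation conditions make `P₀` annihilate the `θ`-dependent part of the residual
`b - A(θ) z` and let `Pᵢ` see only its `θᵢ`-part; by tightness the residual vanishes iff all
these projections do, so `A(θ) z = b` decouples into `P₀ A₀ z = P₀ b` and the scalar
conditions `Pᵢ (b - A₀ z) = θᵢ • Pᵢ Aᵢ z`. Finally, `v = c • u` for some `|c| ≤ 1` iff
`vᵀ N v ≤ uᵀ N u` for every `N ⪰ 0`: the rank-one choices `N = w wᵀ` already give
`(w ⬝ v)² ≤ (w ⬝ u)²` for all `w`, which pins `v` to the line through `u`.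
-/

section QuadraticForm

variable {ι : Type*} [Fintype ι]

theorem dotProduct_vecMulVec_self_mulVec {R : Type*} [CommRing R] (w v : ι → R) :
    v ⬝ᵥ (vecMulVec w w *ᵥ v) = (w ⬝ᵥ v) ^ 2 := by
  rw [vecMulVec_mulVec, op_smul_eq_smul, dotProduct_smul, smul_eq_mul, dotProduct_comm, sq]

theorem exists_mem_Icc_smul_of_forall_sq_dotProduct_le {𝕜 : Type*} [Field 𝕜] [LinearOrder 𝕜]
    [IsStrictOrderedRing 𝕜] {u v : ι → 𝕜} (h : ∀ w, (w ⬝ᵥ v) ^ 2 ≤ (w ⬝ᵥ u) ^ 2) :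
    ∃ c ∈ Set.Icc (-1 : 𝕜) 1, v = c • u := by
  rcases eq_or_ne u 0 with rfl | hu
  · refine ⟨0, by norm_num, ?_⟩
    have hvv := h v
    rw [dotProduct_zero, zero_pow two_ne_zero, sq_nonpos_iff, dotProduct_self_eq_zero] at hvv
    rw [hvv, smul_zero]
  have huu : u ⬝ᵥ u ≠ 0 := mt dotProduct_self_eq_zero.mp hu
  set c := (u ⬝ᵥ v) / (u ⬝ᵥ u)
  have hc : |c| ≤ 1 := by
    rw [abs_div]
    exact div_le_one_of_le₀ (sq_le_sq.mp (h u)) (abs_nonneg _)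
  -- `v - c • u` is orthogonal to `u`, so testing `h` against it forces it to vanish
  have hr : v - c • u = 0 := by
    have hur : (v - c • u) ⬝ᵥ u = 0 := by
      rw [sub_dotProduct, smul_dotProduct, smul_eq_mul, dotProduct_comm v,
        div_mul_cancel₀ _ huu, sub_self]
    have hrv : (v - c • u) ⬝ᵥ v = (v - c • u) ⬝ᵥ (v - c • u) := by
      rw [dotProduct_sub _ v, dotProduct_smul, hur, smul_zero, sub_zero]
    have := h (v - c • u)
    rwa [hur, zero_pow two_ne_zero, sq_nonpos_iff, hrv, dotProduct_self_eq_zero] at this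
  exact ⟨c, abs_le.mp hc, sub_eq_zero.mp hr⟩

theorem forall_posSemidef_dotProduct_mulVec_le_iff {u v : ι → ℝ} :
    (∀ N : Matrix ι ι ℝ, N.PosSemidef → v ⬝ᵥ (N *ᵥ v) ≤ u ⬝ᵥ (N *ᵥ u)) ↔
      ∃ c ∈ Set.Icc (-1 : ℝ) 1, v = c • u := by
  constructor
  · intro h
    refine exists_mem_Icc_smul_of_forall_sq_dotProduct_le fun w => ?_
    have hw := h (vecMulVec w w) (by simpa using posSemidef_vecMulVec_self_star w)
    rwa [dotProduct_vecMulVec_self_mulVec, dotProduct_vecMulVec_self_mulVec] at hw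
  · rintro ⟨c, hc, rfl⟩ N hN
    have hq : 0 ≤ u ⬝ᵥ (N *ᵥ u) := by simpa using hN.dotProduct_mulVec_nonneg u
    have hc2 : c * c ≤ 1 := by nlinarith [hc.1, hc.2]
    rw [mulVec_smul, smul_dotProduct, dotProduct_smul, smul_eq_mul, smul_eq_mul, ← mul_assoc]
    exact mul_le_of_le_one_left hq hc2

end QuadraticForm

section Decoupling

variable {R ι k l k₀ : Type*} {r : ι → Type*} [CommRing R] [Fintype ι]
  [Fintype k] [Fintype l]

theorem mulVec_sum_smul_mulVec_of_mul_eq_zero {A : ι → Matrix k l R}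
    {P : (i : ι) → Matrix (r i) k R} (hP : ∀ i j, i ≠ j → P i * A j = 0)
    (θ : ι → R) (z : l → R) (i : ι) :
    P i *ᵥ ∑ j, θ j • (A j *ᵥ z) = θ i • (P i *ᵥ (A i *ᵥ z)) := by
  rw [mulVec_sum, Fintype.sum_eq_single i fun j hj => ?_, mulVec_smul]
  rw [mulVec_smul, mulVec_mulVec, hP i j hj.symm, zero_mulVec, smul_zero]

theorem mulVec_sum_smul_mulVec_of_forall_mul_eq_zero {A : ι → Matrix k l R}
    {P₀ : Matrix k₀ k R} (hP₀ : ∀ j, P₀ * A j = 0) (θ : ι → R) (z : l → R) :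
    P₀ *ᵥ ∑ j, θ j • (A j *ᵥ z) = 0 := by
  simp only [mulVec_sum, mulVec_smul, mulVec_mulVec, hP₀, zero_mulVec, smul_zero,
    Finset.sum_const_zero]

theorem eq_zero_of_add_sum_mul_eq_one [DecidableEq k] [Fintype k₀] [∀ i, Fintype (r i)]
    {P₀ : Matrix k₀ k R} {M₀ : Matrix k k₀ R} {P : (i : ι) → Matrix (r i) k R}
    {M : (i : ι) → Matrix k (r i) R} (hM : M₀ * P₀ + ∑ i, M i * P i = 1) {x : k → R}
    (h₀ : P₀ *ᵥ x = 0) (h : ∀ i, P i *ᵥ x = 0) : x = 0 :=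
  calc x = (M₀ * P₀ + ∑ i, M i * P i) *ᵥ x := by rw [hM, one_mulVec]
    _ = M₀ *ᵥ (P₀ *ᵥ x) + ∑ i, M i *ᵥ (P i *ᵥ x) := by
      simp only [add_mulVec, sum_mulVec, mulVec_mulVec]
    _ = 0 := by simp [h₀, h]

theorem add_sum_smul_mulVec_eq_iff [DecidableEq k] [Fintype k₀] [∀ i, Fintype (r i)]
    {A₀ : Matrix k l R} {A : ι → Matrix k l R} {b : k → R}
    {P₀ : Matrix k₀ k R} {M₀ : Matrix k k₀ R} {P : (i : ι) → Matrix (r i) k R}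
    {M : (i : ι) → Matrix k (r i) R} (hP : ∀ i j, i ≠ j → P i * A j = 0)
    (hP₀ : ∀ j, P₀ * A j = 0) (hM : M₀ * P₀ + ∑ i, M i * P i = 1) (θ : ι → R) (z : l → R) :
    (A₀ + ∑ j, θ j • A j) *ᵥ z = b ↔
      P₀ *ᵥ (A₀ *ᵥ z) = P₀ *ᵥ b ∧
        ∀ i, P i *ᵥ (b - A₀ *ᵥ z) = θ i • (P i *ᵥ (A i *ᵥ z)) := by
  have hAz : (A₀ + ∑ j, θ j • A j) *ᵥ z = A₀ *ᵥ z + ∑ j, θ j • (A j *ᵥ z) := by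
    simp only [add_mulVec, sum_mulVec, smul_mulVec]
  rw [hAz]
  constructor
  · rintro rfl
    refine ⟨?_, fun i => ?_⟩
    · rw [mulVec_add, mulVec_sum_smul_mulVec_of_forall_mul_eq_zero hP₀, add_zero]
    · rw [add_sub_cancel_left, mulVec_sum_smul_mulVec_of_mul_eq_zero hP]
  · rintro ⟨h₀, h⟩
    refine (sub_eq_zero.mp (eq_zero_of_add_sum_mul_eq_one hM ?_ fun i => ?_)).symm
    · rw [mulVec_sub, mulVec_add, mulVec_sum_smul_mulVec_of_forall_mul_eq_zero hP₀, add_zero,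
        h₀, sub_self]
    · rw [← sub_sub, mulVec_sub, h, mulVec_sum_smul_mulVec_of_mul_eq_zero hP, sub_self]

end Decoupling

/-- Under the tightness condition `∑ᵢ MᵢPᵢ = I`, the nonconvex quadratic
inequalities over the field `z` (plus the affine constraint `P₀A₀z = P₀b`)
are equivalent to the physics equation with interval-constrained parameters. -/
theorem physics_iff_quad_ineqs (d m n m0 : ℕ) (mdim : Fin d → ℕ)
    (A0 : Matrix (Fin m) (Fin n) ℝ) (A : Fin d → Matrix (Fin m) (Fin n) ℝ)
    (b : Fin m → ℝ)
    (P : (i : Fin d) → Matrix (Fin (mdim i)) (Fin m) ℝ)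
    (P0 : Matrix (Fin m0) (Fin m) ℝ)
    (hP : ∀ i j : Fin d, i ≠ j → P i * A j = 0)
    (hP0 : ∀ j : Fin d, P0 * A j = 0)
    (M : (i : Fin d) → Matrix (Fin m) (Fin (mdim i)) ℝ)
    (M0 : Matrix (Fin m) (Fin m0) ℝ)
    (hM : M0 * P0 + ∑ i, M i * P i = 1)
    (z : Fin n → ℝ) :
    (∃ θ : Fin d → ℝ, (∀ i, -1 ≤ θ i ∧ θ i ≤ 1) ∧
        (A0 + ∑ j, θ j • A j) *ᵥ z = b) ↔
    (P0 *ᵥ (A0 *ᵥ z) = P0 *ᵥ b ∧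
      ∀ i : Fin d, ∀ N : Matrix (Fin (mdim i)) (Fin (mdim i)) ℝ,
        N.PosSemidef →
        (P i *ᵥ (b - A0 *ᵥ z)) ⬝ᵥ (N *ᵥ (P i *ᵥ (b - A0 *ᵥ z))) ≤
          (P i *ᵥ (A i *ᵥ z)) ⬝ᵥ (N *ᵥ (P i *ᵥ (A i *ᵥ z)))) := by
  simp_rw [add_sum_smul_mulVec_eq_iff hP hP0 hM, forall_posSemidef_dotProduct_mulVec_le_iff,
    Classical.skolem]
  constructor
  · rintro ⟨θ, hθ, h0, h⟩
    exact ⟨h0, θ, fun i => ⟨hθ i, h i⟩⟩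
  · rintro ⟨h0, θ, h⟩
    exact ⟨θ, fun i => (h i).1, h0, fun i => (h i).2⟩
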